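/- arXiv:2311.03341 — 2 statements merged into one kernel-verified Lean document; each statement's English description precedes it below -/
import Mathlib

section
/- For all integers r, t ≥ 2, there exist constants 0 < ε ≤ 1/2 and c > 1 such that for every integer s ≥ 1 and every positive integer n, every n-vertex graph that contains no K_{s,s} subgraph and no induced subgraph isomorphic to K_{r,t} has at most c·s^4·n^{2−ε} edges. -/
open SimpleGraph

/-- `G` contains a copy of `H` as a (not necessarily induced) subgraph. -/
def HasSubgraphCopy {V W : Type} (G : SimpleGraph V) (H : SimpleGraph W) : Prop :=
  ∃ f : H →g G, Function.Injective f

/-- `G` contains an induced copy of `H`. -/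
def HasInducedCopy {V W : Type} (G : SimpleGraph V) (H : SimpleGraph W) : Prop :=
  ∃ s : Set V, Nonempty ((G.induce s) ≃g H)

/-- The graph obtained from `G` by subdividing the edge `ab` once (`none` is the new vertex). -/
def edgeSubdiv {V : Type} (G : SimpleGraph V) (a b : V) : SimpleGraph (Option V) :=
  SimpleGraph.fromRel (fun x y =>
    (∃ x' y' : V, x = some x' ∧ y = some y' ∧ G.Adj x' y' ∧
      ¬((x' = a ∧ y' = b) ∨ (x' = b ∧ y' = a))) ∨
    (x = none ∧ (y = some a ∨ y = some b)))

/-- `IsSubdivision H S` : `S` is obtained from `H` by a finite sequence of single edge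
subdivisions (edges of `H` get replaced by possibly longer paths). -/
inductive IsSubdivision : {V : Type} → SimpleGraph V → {W : Type} → SimpleGraph W → Prop
  | refl {V : Type} (G : SimpleGraph V) : IsSubdivision G G
  | step {V W : Type} (G : SimpleGraph V) (H : SimpleGraph W) (a b : W) :
      IsSubdivision G H → H.Adj a b → IsSubdivision G (edgeSubdiv H a b)

/-- `G` contains an induced subdivision of `H`, i.e. some induced subgraph of `G` is
isomorphic to a subdivision of `H`. -/
def HasInducedSubdivision {V W : Type} (G : SimpleGraph V) (H : SimpleGraph W) : Prop :=
  ∃ (U : Type) (S : SimpleGraph U), IsSubdivision H S ∧ HasInducedCopy G S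

/-- The average degree `2e(G)/|V(G)|` of a finite graph. -/
noncomputable def avgDeg {V : Type} (G : SimpleGraph V) [Fintype V] : ℝ :=
  2 * G.edgeSet.ncard / Fintype.card V

/-- `ExtremalBound H ε c` : for every integer `s ≥ 1`, every finite graph on a positive number
`n` of vertices with no `K_{s,s}` subgraph and no induced copy of `H` has at most
`c·s⁴·n^(2-ε)` edges. -/
def ExtremalBound {VH : Type} (H : SimpleGraph VH) (ε c : ℝ) : Prop :=
  ∀ s : ℕ, 1 ≤ s → ∀ (V : Type) [Fintype V], ∀ G : SimpleGraph V,
    0 < Fintype.card V →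
    ¬ HasSubgraphCopy G (completeBipartiteGraph (Fin s) (Fin s)) →
    ¬ HasInducedCopy G H →
    (G.edgeSet.ncard : ℝ) ≤ c * (s : ℝ) ^ 4 * (Fintype.card V : ℝ) ^ ((2 : ℝ) - ε)

/-!
A `K_{s,s}`-free graph has no clique on `2s` vertices. By Ramsey's theorem every set of
`M = C(2s + t, t)` vertices then contains an independent `t`-set, and an independent `t`-set `T`
has fewer than `C(2s + r, r)` common neighbours: otherwise these contain an independent `r`-set
`R`, and `R ∪ T` induces `K_{r,t}`. Both bounds are polynomial in `s`, not in `n`.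

By supersaturation a neighbourhood of size `d` contains at least `C(d, t) / C(M, t)` independent
`t`-sets, so double counting pairs (vertex, independent `t`-set in its neighbourhood) and the
power mean inequality give `e(G)^t ≤ c s^q n^(2t-1)` with `q = t² + r`. Interpolating between
this and `e(G) ≤ n²` yields `e(G) ≤ c s⁴ n^(2 - 4/(tq))`.
-/

open Finset

theorem Nat.pow_le_mul_choose_add_one (d t : ℕ) : d ^ t ≤ t ^ (2 * t) * (d.choose t + 1) := by
  obtain rfl | ht := Nat.eq_zero_or_pos t
  · simp
  rcases lt_or_ge d t with hdt | htd
  · calc d ^ t ≤ t ^ t * 1 := by rw [mul_one]; exact Nat.pow_le_pow_left hdt.le t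
      _ ≤ t ^ t * (t ^ t * (d.choose t + 1)) := by
        gcongr; exact Nat.one_le_iff_ne_zero.2 (by positivity)
      _ = t ^ (2 * t) * (d.choose t + 1) := by ring
  · -- each of the `t` factors of `d (d - 1) ⋯ (d - t + 1)` is at least `d / t`
    have hd : d ≤ t * (d + 1 - t) := by
      obtain ⟨k, rfl⟩ := Nat.exists_eq_add_of_le htd
      rw [show t + k + 1 - t = k + 1 by omega]
      nlinarith
    calc d ^ t ≤ (t * (d + 1 - t)) ^ t := Nat.pow_le_pow_left hd t
      _ = t ^ t * (d + 1 - t) ^ t := Nat.mul_pow _ _ _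
      _ ≤ t ^ t * d.descFactorial t := by gcongr; exact Nat.pow_sub_le_descFactorial d t
      _ = t ^ t * (t.factorial * d.choose t) := by rw [Nat.descFactorial_eq_factorial_mul_choose]
      _ ≤ t ^ t * (t ^ t * (d.choose t + 1)) := by
        gcongr; exacts [Nat.factorial_le_pow t, by omega]
      _ = t ^ (2 * t) * (d.choose t + 1) := by ring

namespace Finset

theorem choose_card_le_choose_mul_card_filter_subset {α : Type*} [DecidableEq α]
    {𝓕 : Finset (Finset α)} {D : Finset α} {t M : ℕ} (hM : M ≤ #D)
    (h𝓕 : ∀ T ∈ 𝓕, #T = t) (hcover : ∀ W ⊆ D, #W = M → ∃ T ∈ 𝓕, T ⊆ W) :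
    (#D).choose t ≤ M.choose t * #{T ∈ 𝓕 | T ⊆ D} := by
  obtain ⟨W₀, hW₀D, hW₀⟩ := exists_subset_card_eq hM
  obtain ⟨T₀, hT₀, hT₀W₀⟩ := hcover W₀ hW₀D hW₀
  have htM : t ≤ M := h𝓕 T₀ hT₀ ▸ hW₀ ▸ card_le_card hT₀W₀
  -- double count the pairs `T ⊆ W` with `T ∈ 𝓕` and `W` an `M`-subset of `D`
  have hdouble : #(D.powersetCard M) * 1 ≤ #{T ∈ 𝓕 | T ⊆ D} * (#D - t).choose (M - t) := by
    refine card_mul_le_card_mul (fun W T ↦ T ⊆ W) (fun W hW ↦ ?_) (fun T hT ↦ ?_)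
    · obtain ⟨hWD, hWM⟩ := mem_powersetCard.1 hW
      obtain ⟨T, hT, hTW⟩ := hcover W hWD hWM
      exact card_pos.2 ⟨T, mem_filter.2 ⟨mem_filter.2 ⟨hT, hTW.trans hWD⟩, hTW⟩⟩
    · obtain ⟨hT, hTD⟩ := mem_filter.1 hT
      rw [bipartiteBelow, card_filter_powersetCard_subset T D M hTD (h𝓕 T hT ▸ htM),
        h𝓕 T hT]
  rw [card_powersetCard, mul_one] at hdouble
  refine Nat.le_of_mul_le_mul_right ?_ (Nat.choose_pos (Nat.sub_le_sub_right hM t))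
  calc (#D).choose t * (#D - t).choose (M - t) = (#D).choose M * M.choose t :=
        (Nat.choose_mul htM).symm
    _ ≤ #{T ∈ 𝓕 | T ⊆ D} * (#D - t).choose (M - t) * M.choose t := by gcongr
    _ = M.choose t * #{T ∈ 𝓕 | T ⊆ D} * (#D - t).choose (M - t) := by ring

end Finset

namespace SimpleGraph

theorem exists_isNClique_or_isNIndepSet_of_choose_le {V : Type*} [DecidableEq V]
    (G : SimpleGraph V) [DecidableRel G.Adj] (a b : ℕ) (S : Finset V)
    (hS : (a + b).choose b ≤ #S) :
    (∃ T ⊆ S, G.IsNClique a T) ∨ ∃ T ⊆ S, G.IsNIndepSet b T := by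
  induction a generalizing b S with
  | zero => exact .inl ⟨∅, empty_subset _, by simp⟩
  | succ a iha =>
    induction b generalizing S with
    | zero => exact .inr ⟨∅, empty_subset _, by simp [isNIndepSet_iff]⟩
    | succ b ihb =>
      obtain ⟨v, hv⟩ : S.Nonempty := card_pos.mp ((Nat.choose_pos (by omega)).trans_le hS)
      set A := {u ∈ S.erase v | G.Adj v u}
      set B := {u ∈ S.erase v | ¬G.Adj v u}
      have hAB : #A + #B + 1 = #S := by
        rw [card_filter_add_card_filter_not, card_erase_add_one hv]
      have hpascal : (a + 1 + (b + 1)).choose (b + 1)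
          = (a + (b + 1)).choose (b + 1) + (a + 1 + b).choose b := by
        rw [show a + 1 + (b + 1) = a + 1 + b + 1 by omega, Nat.choose_succ_succ',
          show a + 1 + b = a + (b + 1) by omega, add_comm]
      have hAS : A ⊆ S := (filter_subset _ _).trans (erase_subset _ _)
      have hBS : B ⊆ S := (filter_subset _ _).trans (erase_subset _ _)
      by_cases hA : (a + (b + 1)).choose (b + 1) ≤ #A
      · refine (iha (b + 1) A hA).imp (fun ⟨T, hTA, hT⟩ ↦ ?_)
          fun ⟨T, hTA, hT⟩ ↦ ⟨T, hTA.trans hAS, hT⟩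
        exact ⟨insert v T, insert_subset hv (hTA.trans hAS),
          hT.insert fun u hu ↦ (mem_filter.1 (hTA hu)).2⟩
      · refine (ihb B (by omega)).imp (fun ⟨T, hTB, hT⟩ ↦ ⟨T, hTB.trans hBS, hT⟩)
          fun ⟨T, hTB, hT⟩ ↦ ?_
        refine ⟨insert v T, insert_subset hv (hTB.trans hBS), ?_⟩
        rw [← isNClique_compl] at hT ⊢
        refine hT.insert fun u hu ↦ ?_
        obtain ⟨hu, hvu⟩ := mem_filter.1 (hTB hu)
        exact (compl_adj G v u).2 ⟨(ne_of_mem_erase hu).symm, hvu⟩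

theorem exists_isNIndepSet_of_cliqueFree {V : Type*} [DecidableEq V] (G : SimpleGraph V)
    [DecidableRel G.Adj] {a b : ℕ} (h : G.CliqueFree a) (W : Finset V)
    (hW : (a + b).choose b ≤ #W) : ∃ T ⊆ W, G.IsNIndepSet b T :=
  (G.exists_isNClique_or_isNIndepSet_of_choose_le a b W hW).resolve_left
    fun ⟨T, _, hT⟩ ↦ h T hT

theorem cliqueFree_of_not_hasSubgraphCopy {V : Type} (G : SimpleGraph V) {a b : ℕ}
    (h : ¬HasSubgraphCopy G (completeBipartiteGraph (Fin a) (Fin b))) : G.CliqueFree (a + b) := by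
  have := cliqueFree_iff_top_free (G := G) (β := Fin a ⊕ Fin b)
  rw [Fintype.card_sum, Fintype.card_fin, Fintype.card_fin] at this
  refine this.2 fun ⟨f⟩ ↦ h ?_
  exact ⟨(f.comp (Copy.ofLE _ _ le_top)).toHom, (f.comp (Copy.ofLE _ _ le_top)).injective⟩

theorem IsNIndepSet.not_adj {V : Type*} {G : SimpleGraph V} {k : ℕ} {S : Finset V}
    (hS : G.IsNIndepSet k S) {x y : V} (hx : x ∈ S) (hy : y ∈ S) : ¬G.Adj x y :=
  fun hxy ↦ hS.isIndepSet hx hy hxy.ne hxy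

theorem hasInducedCopy_completeBipartiteGraph {V : Type} {G : SimpleGraph V} {r t : ℕ}
    {R T : Finset V} (hR : G.IsNIndepSet r R) (hT : G.IsNIndepSet t T)
    (hRT : ∀ x ∈ R, ∀ y ∈ T, G.Adj x y) :
    HasInducedCopy G (completeBipartiteGraph (Fin r) (Fin t)) := by
  let eR := (R.equivFinOfCardEq hR.card_eq).symm
  let eT := (T.equivFinOfCardEq hT.card_eq).symm
  let f : Fin r ⊕ Fin t ↪ V :=
    ⟨Sum.elim (fun i ↦ eR i) (fun j ↦ eT j),
      Function.Injective.sumElim (Subtype.val_injective.comp eR.injective)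
        (Subtype.val_injective.comp eT.injective)
        fun i j h ↦ G.irrefl (h ▸ hRT _ (eR i).2 _ (eT j).2)⟩
  have hf : G.comap f = completeBipartiteGraph (Fin r) (Fin t) := by
    ext (i | i) (j | j)
    · simpa [f] using hR.not_adj (eR i).2 (eR j).2
    · simpa [f] using hRT _ (eR i).2 _ (eT j).2
    · simpa [f] using (hRT _ (eR j).2 _ (eT i).2).symm
    · simpa [f] using hT.not_adj (eT i).2 (eT j).2
  obtain ⟨s, ⟨e⟩⟩ :=
    isIndContained_iff_exists_iso_induce.1 (isIndContained_iff_exists_comap_eq.2 ⟨f, hf⟩)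
  exact ⟨s, ⟨e.symm⟩⟩

open Fintype

section Counting

variable {V : Type*} [Fintype V] [DecidableEq V] (G : SimpleGraph V) [DecidableRel G.Adj]
  {t M m : ℕ}

theorem choose_degree_le_choose_mul
    (hcover : ∀ W : Finset V, #W = M → ∃ T ⊆ W, G.IsNIndepSet t T) (v : V) :
    (G.degree v).choose t
      ≤ M.choose t * (#{T ∈ G.indepSetFinset t | T ⊆ G.neighborFinset v} + 1) := by
  rcases le_or_gt M (G.degree v) with hM | hM
  · rw [← card_neighborFinset_eq_degree] at hM ⊢
    refine (choose_card_le_choose_mul_card_filter_subset (𝓕 := G.indepSetFinset t) hM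
      (fun T hT ↦ ?_) fun W _ hW ↦ ?_).trans (by gcongr; omega)
    · exact (mem_indepSetFinset_iff.1 hT).card_eq
    · obtain ⟨T, hTW, hT⟩ := hcover W hW
      exact ⟨T, mem_indepSetFinset_iff.2 hT, hTW⟩
  · exact (Nat.choose_le_choose t hM.le).trans (Nat.le_mul_of_pos_right _ (by omega))

theorem sum_card_indepSet_subset_neighborFinset_le
    (hcodeg : ∀ T, G.IsNIndepSet t T → #{v | T ⊆ G.neighborFinset v} ≤ m) :
    ∑ v, #{T ∈ G.indepSetFinset t | T ⊆ G.neighborFinset v} ≤ m * card V ^ t := by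
  have hcard : #(G.indepSetFinset t) ≤ card V ^ t :=
    calc #(G.indepSetFinset t) ≤ #(univ.powersetCard t : Finset (Finset V)) :=
          card_le_card fun T hT ↦ mem_powersetCard_univ.2 (mem_indepSetFinset_iff.1 hT).card_eq
      _ = (card V).choose t := by rw [card_powersetCard, card_univ]
      _ ≤ card V ^ t := Nat.choose_le_pow _ _
  calc ∑ v, #{T ∈ G.indepSetFinset t | T ⊆ G.neighborFinset v}
      = ∑ T ∈ G.indepSetFinset t, #{v | T ⊆ G.neighborFinset v} := by
        simp only [card_filter]; exact sum_comm
    _ ≤ ∑ _T ∈ G.indepSetFinset t, m :=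
        sum_le_sum fun T hT ↦ hcodeg T (mem_indepSetFinset_iff.1 hT)
    _ ≤ m * card V ^ t := by rw [sum_const, smul_eq_mul, mul_comm]; gcongr

theorem two_mul_card_edgeFinset_pow_le (ht : 1 ≤ t)
    (hcover : ∀ W : Finset V, #W = M → ∃ T ⊆ W, G.IsNIndepSet t T)
    (hcodeg : ∀ T, G.IsNIndepSet t T → #{v | T ⊆ G.neighborFinset v} ≤ m) :
    (2 * #G.edgeFinset) ^ t
      ≤ t ^ (2 * t) * (M.choose t + 1) * (m + 1) * card V ^ (2 * t - 1) := by
  set n := card V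
  set c : V → ℕ := fun v ↦ #{T ∈ G.indepSetFinset t | T ⊆ G.neighborFinset v}
  have hdeg (v : V) : G.degree v ^ t ≤ t ^ (2 * t) * ((M.choose t + 1) * (c v + 1)) :=
    (Nat.pow_le_mul_choose_add_one _ t).trans <| by
      gcongr
      nlinarith [G.choose_degree_le_choose_mul hcover v]
  have hsum : ∑ v, (c v + 1) ≤ (m + 1) * n ^ t := by
    rw [sum_add_distrib, sum_const, card_univ, smul_eq_mul, mul_one, add_mul, one_mul]
    exact add_le_add (G.sum_card_indepSet_subset_neighborFinset_le hcodeg)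
      (Nat.le_self_pow (by omega) n)
  obtain ⟨u, rfl⟩ := Nat.exists_eq_add_of_le' ht
  calc (2 * #G.edgeFinset) ^ (u + 1) = (∑ v, G.degree v) ^ (u + 1) := by
        rw [sum_degrees_eq_twice_card_edges]
    _ ≤ n ^ u * ∑ v, G.degree v ^ (u + 1) := by
        simpa using pow_sum_le_card_mul_sum_pow (s := univ) (f := fun v ↦ G.degree v)
          (fun _ _ ↦ Nat.zero_le _) u
    _ ≤ n ^ u * ∑ v, (u + 1) ^ (2 * (u + 1)) * ((M.choose (u + 1) + 1) * (c v + 1)) := by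
        gcongr with v; exact hdeg v
    _ = n ^ u * ((u + 1) ^ (2 * (u + 1)) * (M.choose (u + 1) + 1) * ∑ v, (c v + 1)) := by
        rw [← mul_sum, ← mul_sum, mul_assoc]
    _ ≤ n ^ u * ((u + 1) ^ (2 * (u + 1)) * (M.choose (u + 1) + 1) * ((m + 1) * n ^ (u + 1))) :=
        by gcongr
    _ = _ := by rw [show 2 * (u + 1) - 1 = u + (u + 1) by omega, pow_add]; ring

end Counting

section Forbidden

variable {V : Type} [Fintype V] [DecidableEq V] (G : SimpleGraph V) [DecidableRel G.Adj]

theorem card_filter_subset_neighborFinset_lt {a r t : ℕ} (h : G.CliqueFree a)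
    (hind : ¬HasInducedCopy G (completeBipartiteGraph (Fin r) (Fin t)))
    {T : Finset V} (hT : G.IsNIndepSet t T) :
    #{v | T ⊆ G.neighborFinset v} < (a + r).choose r := by
  by_contra! hS
  obtain ⟨R, hRS, hR⟩ := G.exists_isNIndepSet_of_cliqueFree h _ hS
  exact hind <| hasInducedCopy_completeBipartiteGraph hR hT fun x hx y hy ↦
    (mem_neighborFinset G x y).1 ((mem_filter.1 (hRS hx)).2 hy)

theorem card_edgeFinset_pow_le_of_not_hasInducedCopy {s r t : ℕ} (hs : 1 ≤ s) (ht : 1 ≤ t)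
    (hKss : ¬HasSubgraphCopy G (completeBipartiteGraph (Fin s) (Fin s)))
    (hind : ¬HasInducedCopy G (completeBipartiteGraph (Fin r) (Fin t))) :
    #G.edgeFinset ^ t ≤ 4 * (t ^ (2 * t) * (t + 2) ^ (t * t) * (r + 2) ^ r) * s ^ (t * t + r)
      * card V ^ (2 * t - 1) := by
  have hfree := cliqueFree_of_not_hasSubgraphCopy G hKss
  set M := (s + s + t).choose t
  set m := (s + s + r).choose r
  have hcount := G.two_mul_card_edgeFinset_pow_le (M := M) (m := m) ht
    (fun W hW ↦ G.exists_isNIndepSet_of_cliqueFree hfree W hW.ge)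
    (fun T hT ↦ (G.card_filter_subset_neighborFinset_lt hfree hind hT).le)
  have hchoose (k : ℕ) : (s + s + k).choose k ≤ ((k + 2) * s) ^ k :=
    (Nat.choose_le_pow _ _).trans (Nat.pow_le_pow_left (by nlinarith) k)
  have hM : M.choose t + 1 ≤ 2 * ((t + 2) * s) ^ (t * t) := by
    have := (Nat.choose_le_pow M t).trans (Nat.pow_le_pow_left (hchoose t) t)
    rw [← pow_mul] at this
    have : 1 ≤ ((t + 2) * s) ^ (t * t) := Nat.one_le_pow _ _ (by positivity)
    omega
  have hm : m + 1 ≤ 2 * ((r + 2) * s) ^ r := by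
    have := hchoose r
    have : 1 ≤ ((r + 2) * s) ^ r := Nat.one_le_pow _ _ (by positivity)
    omega
  calc #G.edgeFinset ^ t ≤ (2 * #G.edgeFinset) ^ t := by gcongr; omega
    _ ≤ t ^ (2 * t) * (M.choose t + 1) * (m + 1) * card V ^ (2 * t - 1) := hcount
    _ ≤ t ^ (2 * t) * (2 * ((t + 2) * s) ^ (t * t)) * (2 * ((r + 2) * s) ^ r)
          * card V ^ (2 * t - 1) := by gcongr
    _ = _ := by rw [mul_pow, mul_pow, pow_add]; ring

end Forbidden

end SimpleGraph

theorem le_mul_rpow_of_pow_le_of_le_sq {E C s n : ℝ} {t q : ℕ} (ht : 1 ≤ t) (hq : 4 ≤ q)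
    (hE : 0 ≤ E) (hC : 1 ≤ C) (hs : 1 ≤ s) (hn : 0 < n) (hEn : E ≤ n ^ 2)
    (hEt : E ^ t ≤ C * s ^ q * n ^ (2 * t - 1)) :
    E ≤ C * s ^ 4 * n ^ (2 - 4 / (t * q : ℝ)) := by
  obtain ⟨u, rfl⟩ := Nat.exists_eq_add_of_le' ht
  obtain ⟨p, rfl⟩ := Nat.exists_eq_add_of_le' hq
  rw [show 2 * (u + 1) - 1 = 2 * u + 1 by omega] at hEt
  set N := (u + 1) * (p + 4)
  -- interpolate: `E ^ (t * q) = (E ^ t) ^ 4 * E ^ (t * (q - 4))`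
  have hN : p + 4 ≤ N := Nat.le_mul_of_pos_left _ (by omega)
  have key : E ^ N * n ^ 4 ≤ (C * s ^ 4) ^ N * n ^ (2 * N) :=
    calc E ^ N * n ^ 4 = (E ^ (u + 1)) ^ 4 * n ^ 4 * E ^ ((u + 1) * p) := by ring
      _ ≤ (C * s ^ (p + 4) * n ^ (2 * u + 1)) ^ 4 * n ^ 4 * (n ^ 2) ^ ((u + 1) * p) := by
        gcongr
      _ = C ^ 4 * s ^ (4 * (p + 4)) * n ^ (2 * N) := by ring
      _ ≤ C ^ N * s ^ (4 * N) * n ^ (2 * N) := by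
        gcongr; omega
      _ = (C * s ^ 4) ^ N * n ^ (2 * N) := by ring
  have hrpow : (n ^ (2 - 4 / (↑(u + 1) * ↑(p + 4) : ℝ))) ^ N * n ^ 4 = n ^ (2 * N) := by
    rw [← Real.rpow_natCast _ N, ← Real.rpow_mul hn.le, ← Real.rpow_natCast n 4,
      ← Real.rpow_add hn, ← Real.rpow_natCast n (2 * N)]
    congr 1
    simp only [N]
    push_cast
    field_simp
    ring
  rw [← pow_le_pow_iff_left₀ hE (by positivity) (by omega : N ≠ 0), mul_pow]
  exact le_of_mul_le_mul_right (by rw [mul_assoc, hrpow]; exact key) (by positivity)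

theorem stmt_4_general (r t : ℕ) (ht : 2 ≤ t) :
    ∃ ε c : ℝ, 0 < ε ∧ ε ≤ 1 / 2 ∧ 1 < c ∧
      ExtremalBound (completeBipartiteGraph (Fin r) (Fin t)) ε c := by
  set q := t * t + r
  have hq : 4 ≤ q := le_add_right (Nat.mul_le_mul ht ht)
  have htq : (8 : ℝ) ≤ t * q := by exact_mod_cast Nat.mul_le_mul ht hq
  set c := t ^ (2 * t) * (t + 2) ^ (t * t) * (r + 2) ^ r
  have hc : 1 ≤ c := Nat.one_le_iff_ne_zero.2 (by positivity)
  refine ⟨4 / (t * q), (4 * c : ℕ), by positivity,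
    by rw [div_le_iff₀ (by positivity)]; linarith, by exact_mod_cast (by omega : 1 < 4 * c), ?_⟩
  intro s hs V _ G hV hKss hind
  classical
  have hcount := G.card_edgeFinset_pow_le_of_not_hasInducedCopy hs (by omega) hKss hind
  rw [← coe_edgeFinset, Set.ncard_coe_finset]
  refine le_mul_rpow_of_pow_le_of_le_sq (q := q) (by omega) hq (by positivity)
    (by exact_mod_cast (by omega : 1 ≤ 4 * c)) (by exact_mod_cast hs) (by exact_mod_cast hV)
    (by exact_mod_cast G.card_edgeFinset_le_card_choose_two.trans (Nat.choose_le_pow _ 2)) ?_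
  exact_mod_cast hcount

/-- For all integers `r, t ≥ 2` there are constants `0 < ε ≤ 1/2` and
`c > 1` such that for every `s ≥ 1`, every `n`-vertex graph with no `K_{s,s}` subgraph and
no induced copy of `K_{r,t}` has at most `c·s⁴·n^(2-ε)` edges. -/
theorem stmt_4 (r t : ℕ) (hr : 2 ≤ r) (ht : 2 ≤ t) :
    ∃ ε c : ℝ, 0 < ε ∧ ε ≤ 1 / 2 ∧ 1 < c ∧
      ExtremalBound (completeBipartiteGraph (Fin r) (Fin t)) ε c :=
  stmt_4_general r t ht
end

section
/- For every positive integer n and every graph J on n vertices, every proper subdivision of the complete graph K_n contains an induced subdivision of J, i.e., some induced subgraph of the proper subdivision of K_n is isomorphic to a subdivision of J. -/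
open SimpleGraph

/-- The 1-subdivision of a graph: every edge is subdivided exactly once. -/
def oneSubdiv {V : Type} (G : SimpleGraph V) : SimpleGraph (V ⊕ G.edgeSet) :=
  SimpleGraph.fromRel (fun x y => ∃ (v : V) (e : G.edgeSet),
    x = Sum.inl v ∧ y = Sum.inr e ∧ v ∈ (e : Sym2 V))

/-- The number of edges of `G` with one endpoint in `A` and the other in `B`. -/
noncomputable def crossEdges {V : Type} (G : SimpleGraph V) (A B : Set V) : ℕ :=
  {e : Sym2 V | e ∈ G.edgeSet ∧ ∃ a ∈ A, ∃ b ∈ B, e = s(a, b)}.ncard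

/-- `G` is `d`-degenerate: every nonempty (induced) subgraph has a vertex of degree at most `d`. -/
def Degenerate {V : Type} (G : SimpleGraph V) (d : ℝ) : Prop :=
  ∀ s : Set V, s.Nonempty → ∃ v ∈ s, ((G.neighborSet v ∩ s).ncard : ℝ) ≤ d

/-- The maximum average degree of `G`: the maximum of the average degree over all induced
subgraphs of `G`. -/
noncomputable def maxAvgDeg {V : Type} (G : SimpleGraph V) [Fintype V] : ℝ :=
  ⨆ t : Finset V, avgDeg (G.induce (t : Set V))

/-- A proper subdivision of `H` is a subdivision in which every edge of `H` is subdivided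
at least once; equivalently, a subdivision of the 1-subdivision of `H`. -/
def IsProperSubdivision {V W : Type} (H : SimpleGraph V) (S : SimpleGraph W) : Prop :=
  IsSubdivision (oneSubdiv H) S

/-!
Subdividing an edge `ab` of a graph `G` preserves the property of containing an induced
subdivision of `J`: if both `a` and `b` lie in the induced copy, subdivide the corresponding
edge of the copy as well; otherwise the copy does not use the edge `ab` at all. So it suffices
to find an induced subdivision of `J` in the 1-subdivision of `K_n`. There the branch vertices
together with the subdivision vertices of the edges of `J` induce the 1-subdivision of `J`,
which is a subdivision of `J` obtained by subdividing its edges one at a time.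
-/

section edgeSubdiv

variable {V : Type} (G : SimpleGraph V) (a b : V)

@[simp]
lemma edgeSubdiv_adj_some_some (x y : V) :
    (edgeSubdiv G a b).Adj (some x) (some y) ↔
      G.Adj x y ∧ ¬((x = a ∧ y = b) ∨ (x = b ∧ y = a)) := by
  simp only [edgeSubdiv, fromRel_adj, ne_eq, Option.some.injEq, reduceCtorEq, false_and,
    or_false, exists_and_left, exists_eq_left', adj_comm G y x]
  constructor
  · rintro ⟨-, h | h⟩ <;> tauto
  · exact fun h => ⟨h.1.ne, Or.inl h⟩

@[simp]
lemma edgeSubdiv_adj_none_some (y : V) :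
    (edgeSubdiv G a b).Adj none (some y) ↔ y = a ∨ y = b := by
  simp [edgeSubdiv]

@[simp]
lemma edgeSubdiv_adj_some_none (x : V) :
    (edgeSubdiv G a b).Adj (some x) none ↔ x = a ∨ x = b := by
  rw [adj_comm, edgeSubdiv_adj_none_some]

end edgeSubdiv

def edgeSubdivCongr {V W : Type} {G : SimpleGraph V} {G' : SimpleGraph W} (φ : G ≃g G')
    (a b : V) : edgeSubdiv G a b ≃g edgeSubdiv G' (φ a) (φ b) where
  toEquiv := Equiv.optionCongr φ.toEquiv
  map_rel_iff' := by
    rintro (_ | x) (_ | y) <;> simp [φ.injective.eq_iff, φ.map_adj_iff]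

lemma hasInducedCopy_iff_isIndContained {V W : Type} {G : SimpleGraph V} {S : SimpleGraph W} :
    HasInducedCopy G S ↔ S ⊴ G := by
  rw [isIndContained_iff_exists_iso_induce]
  exact exists_congr fun s => ⟨fun ⟨φ⟩ => ⟨φ.symm⟩, fun ⟨φ⟩ => ⟨φ.symm⟩⟩

section embedding

variable {U W : Type} {S : SimpleGraph U} {G : SimpleGraph W} (f : S ↪g G)

lemma edgeSubdiv_isIndContained_edgeSubdiv (x y : U) :
    edgeSubdiv S x y ⊴ edgeSubdiv G (f x) (f y) :=
  ⟨{ toFun := Option.map f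
     inj' := Option.map_injective f.injective
     map_rel_iff' := by rintro (_ | u) (_ | v) <;> simp [f.injective.eq_iff] }⟩

lemma isIndContained_edgeSubdiv_of_not_mem_range {a b : W}
    (hab : ¬(a ∈ Set.range f ∧ b ∈ Set.range f)) : S ⊴ edgeSubdiv G a b :=
  ⟨{ toFun u := some (f u)
     inj' _ _ h := f.injective (Option.some_injective _ h)
     map_rel_iff' {u v} := by
       have hfree : ¬((f u = a ∧ f v = b) ∨ (f u = b ∧ f v = a)) := by
         rintro (⟨rfl, rfl⟩ | ⟨rfl, rfl⟩) <;> exact hab ⟨⟨_, rfl⟩, ⟨_, rfl⟩⟩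
       change (edgeSubdiv G a b).Adj (some (f u)) (some (f v)) ↔ S.Adj u v
       simp [hfree] }⟩

end embedding

section inducedSubdivision

variable {X V W : Type} {J : SimpleGraph X}

lemma HasInducedSubdivision.edgeSubdiv {G : SimpleGraph W} (h : HasInducedSubdivision G J)
    {a b : W} (hab : G.Adj a b) : HasInducedSubdivision (edgeSubdiv G a b) J := by
  obtain ⟨U, S, hS, hSG⟩ := h
  obtain ⟨f⟩ := hasInducedCopy_iff_isIndContained.1 hSG
  by_cases hrange : a ∈ Set.range f ∧ b ∈ Set.range f
  · obtain ⟨⟨x, rfl⟩, ⟨y, rfl⟩⟩ := hrange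
    exact ⟨_, _, hS.step _ _ _ _ (f.map_adj_iff.1 hab),
      hasInducedCopy_iff_isIndContained.2 (edgeSubdiv_isIndContained_edgeSubdiv f x y)⟩
  · exact ⟨U, S, hS,
      hasInducedCopy_iff_isIndContained.2 (isIndContained_edgeSubdiv_of_not_mem_range f hrange)⟩

lemma HasInducedSubdivision.of_isSubdivision {G : SimpleGraph V} {S : SimpleGraph W}
    (hGS : IsSubdivision G S) (h : HasInducedSubdivision G J) : HasInducedSubdivision S J := by
  induction hGS with
  | refl => exact h
  | step _ _ _ _ _ hab ih => exact (ih h).edgeSubdiv hab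

end inducedSubdivision

section oneSubdiv

variable {V : Type} (G : SimpleGraph V)

@[simp]
lemma oneSubdiv_adj_inl_inr (u : V) (e : G.edgeSet) :
    (oneSubdiv G).Adj (Sum.inl u) (Sum.inr e) ↔ u ∈ (e : Sym2 V) := by
  simp [oneSubdiv]

@[simp]
lemma oneSubdiv_adj_inr_inl (u : V) (e : G.edgeSet) :
    (oneSubdiv G).Adj (Sum.inr e) (Sum.inl u) ↔ u ∈ (e : Sym2 V) := by
  rw [adj_comm, oneSubdiv_adj_inl_inr]

@[simp]
lemma oneSubdiv_not_adj_inl_inl (u v : V) : ¬(oneSubdiv G).Adj (Sum.inl u) (Sum.inl v) := by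
  simp [oneSubdiv]

@[simp]
lemma oneSubdiv_not_adj_inr_inr (e f : G.edgeSet) :
    ¬(oneSubdiv G).Adj (Sum.inr e) (Sum.inr f) := by
  simp [oneSubdiv]

lemma oneSubdiv_isIndContained_oneSubdiv {H : SimpleGraph V} (hHG : H ≤ G) :
    oneSubdiv H ⊴ oneSubdiv G :=
  ⟨{ toFun := Sum.map id (Set.inclusion (edgeSet_mono hHG))
     inj' := Sum.map_injective.2 ⟨Function.injective_id, Set.inclusion_injective _⟩
     map_rel_iff' := by rintro (u | e) (v | f) <;> simp }⟩

end oneSubdiv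

/-- The graph obtained from `H` by subdividing once exactly the edges that lie in `F`. -/
def partSubdiv {V : Type} (H : SimpleGraph V) (F : Set (Sym2 V)) :
    SimpleGraph (V ⊕ ↥(H.edgeSet ∩ F)) where
  Adj
    | .inl u, .inl v => H.Adj u v ∧ s(u, v) ∉ F
    | .inl u, .inr e => u ∈ (e : Sym2 V)
    | .inr e, .inl u => u ∈ (e : Sym2 V)
    | .inr _, .inr _ => False
  symm := ⟨by
    rintro (u | e) (v | f) h
    exacts [⟨h.1.symm, Sym2.eq_swap (a := u) ▸ h.2⟩, h, h, h]⟩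
  loopless := ⟨by
    rintro (u | e) h
    exacts [H.irrefl h.1, h]⟩

section partSubdiv

variable {V : Type} (H : SimpleGraph V) (F : Set (Sym2 V))

@[simp]
lemma partSubdiv_adj_inl_inl (u v : V) :
    (partSubdiv H F).Adj (.inl u) (.inl v) ↔ H.Adj u v ∧ s(u, v) ∉ F := .rfl

@[simp]
lemma partSubdiv_adj_inl_inr (u : V) (e : ↥(H.edgeSet ∩ F)) :
    (partSubdiv H F).Adj (.inl u) (.inr e) ↔ u ∈ (e : Sym2 V) := .rfl

@[simp]
lemma partSubdiv_adj_inr_inl (u : V) (e : ↥(H.edgeSet ∩ F)) :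
    (partSubdiv H F).Adj (.inr e) (.inl u) ↔ u ∈ (e : Sym2 V) := .rfl

@[simp]
lemma partSubdiv_not_adj_inr_inr (e f : ↥(H.edgeSet ∩ F)) :
    ¬(partSubdiv H F).Adj (.inr e) (.inr f) := id

def partSubdivEmptyIso : partSubdiv H ∅ ≃g H where
  toEquiv := @Equiv.sumEmpty V _ ⟨fun e => e.2.2⟩
  map_rel_iff' := by
    rintro (u | ⟨_, -, ⟨⟩⟩) (v | ⟨_, -, ⟨⟩⟩)
    simp

def partSubdivEdgeSetIso : partSubdiv H H.edgeSet ≃g oneSubdiv H where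
  toEquiv := Equiv.sumCongr (Equiv.refl V) (Equiv.subtypeEquivRight fun _ => and_self_iff)
  map_rel_iff' := by
    rintro (u | e) (v | f) <;> simp <;> rfl

open Classical in
noncomputable def partSubdivInsertIso {a b : V} (hab : H.Adj a b) (hF : s(a, b) ∉ F) :
    edgeSubdiv (partSubdiv H F) (.inl a) (.inl b) ≃g partSubdiv H (insert s(a, b) F) where
  toFun
    | none => .inr ⟨s(a, b), hab, Set.mem_insert _ _⟩
    | some (.inl v) => .inl v
    | some (.inr e) => .inr ⟨e, e.2.1, Set.mem_insert_of_mem _ e.2.2⟩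
  invFun
    | .inl v => some (.inl v)
    | .inr e =>
      if h : e.1 = s(a, b) then none else some (.inr ⟨e, e.2.1, e.2.2.resolve_left h⟩)
  left_inv := by
    rintro (_ | v | e)
    · simp
    · rfl
    · have : e.1 ≠ s(a, b) := fun h => hF (h ▸ e.2.2)
      simp [this]
  right_inv := by
    rintro (v | ⟨e, he⟩)
    · rfl
    · by_cases h : e = s(a, b)
      · subst h; simp
      · simp [h]
  map_rel_iff' := by
    rintro (_ | u | e) (_ | v | f)
    all_goals simp
    tauto

lemma exists_isSubdivision_iso_partSubdiv {F : Set (Sym2 V)} (hF : F ⊆ H.edgeSet)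
    (hfin : F.Finite) :
    ∃ (U : Type) (S : SimpleGraph U), IsSubdivision H S ∧ Nonempty (S ≃g partSubdiv H F) := by
  induction F, hfin using Set.Finite.induction_on with
  | empty => exact ⟨V, H, .refl H, ⟨(partSubdivEmptyIso H).symm⟩⟩
  | @insert e F he _ ih =>
    obtain ⟨U, S, hS, ⟨φ⟩⟩ := ih ((Set.subset_insert _ _).trans hF)
    induction e using Sym2.ind with | _ a b =>
    have hab : H.Adj a b := hF (Set.mem_insert _ _)
    have hSab : S.Adj (φ.symm (.inl a)) (φ.symm (.inl b)) :=
      φ.symm.map_adj_iff.2 ⟨hab, he⟩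
    exact ⟨_, _, hS.step _ _ _ _ hSab,
      ⟨(edgeSubdivCongr φ.symm (.inl a) (.inl b)).symm.trans (partSubdivInsertIso H F hab he)⟩⟩

end partSubdiv

lemma exists_isSubdivision_iso_oneSubdiv {V : Type} {H : SimpleGraph V}
    (hfin : H.edgeSet.Finite) :
    ∃ (U : Type) (S : SimpleGraph U), IsSubdivision H S ∧ Nonempty (S ≃g oneSubdiv H) := by
  obtain ⟨U, S, hS, ⟨φ⟩⟩ := exists_isSubdivision_iso_partSubdiv H subset_rfl hfin
  exact ⟨U, S, hS, ⟨φ.trans (partSubdivEdgeSetIso H)⟩⟩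

lemma HasInducedSubdivision.oneSubdiv_of_le {V : Type} {G H : SimpleGraph V}
    (hfin : H.edgeSet.Finite) (hHG : H ≤ G) : HasInducedSubdivision (oneSubdiv G) H := by
  obtain ⟨U, S, hS, ⟨φ⟩⟩ := exists_isSubdivision_iso_oneSubdiv hfin
  exact ⟨U, S, hS, hasInducedCopy_iff_isIndContained.2
    (φ.isIndContained.trans (oneSubdiv_isIndContained_oneSubdiv G hHG))⟩

lemma HasInducedSubdivision.of_isProperSubdivision {V W : Type} {G H : SimpleGraph V}
    {S : SimpleGraph W} (hfin : H.edgeSet.Finite) (hHG : H ≤ G) (hS : IsProperSubdivision G S) :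
    HasInducedSubdivision S H :=
  .of_isSubdivision hS (.oneSubdiv_of_le hfin hHG)

theorem stmt_18_general (n : ℕ) (J : SimpleGraph (Fin n))
    {W : Type} (S : SimpleGraph W)
    (hS : IsProperSubdivision (completeGraph (Fin n)) S) :
    HasInducedSubdivision S J :=
  .of_isProperSubdivision (Set.toFinite _) le_top hS

/-- For every positive integer `n` and every graph `J` on `n` vertices,
every proper subdivision of `K_n` contains an induced subdivision of `J`. -/
theorem stmt_18 (n : ℕ) (hn : 0 < n) (J : SimpleGraph (Fin n))
    {W : Type} (S : SimpleGraph W)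
    (hS : IsProperSubdivision (completeGraph (Fin n)) S) :
    HasInducedSubdivision S J :=
  stmt_18_general n J S hS
end
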